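/- arXiv:1007.0907 — 2 statements merged into one kernel-verified Lean document; each statement's English description precedes it below -/
import Mathlib

section
/- Let f, g : ℝ → ℝ be infinitely differentiable (C^∞) functions such that f(x) = g(x) for all x > 0 and f(x) = −g(x) for all x < 0. Then for every n ≥ 0 the n-th derivatives of f and g vanish at the origin: f⁽ⁿ⁾(0) = g⁽ⁿ⁾(0) = 0. -/
open Filter Set Topology

private lemma vanish_of_eventually_zero {h : ℝ → ℝ} (hh : ContDiff ℝ (⊤ : ℕ∞) h)
    {s : Set ℝ} (hs : IsOpen s) (hz : ∀ x ∈ s, h x = 0)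
    (hne : (𝓝[s] (0:ℝ)).NeBot) : ∀ n, iteratedDeriv n h 0 = 0 := by
  intro n
  have hcont : ContinuousAt (iteratedDeriv n h) 0 :=
    (hh.continuous_iteratedDeriv n (by exact_mod_cast le_top)).continuousAt
  have h1 : ∀ x ∈ s, iteratedDeriv n h x = 0 := by
    intro x hx
    have hev : h =ᶠ[𝓝 x] (fun _ => (0:ℝ)) :=
      eventually_of_mem (hs.mem_nhds hx) (fun y hy => hz y hy)
    rw [hev.iteratedDeriv_eq n]
    simp [iteratedDeriv_eq_iteratedFDeriv, iteratedFDeriv_zero_fun]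
  have t1 : Tendsto (iteratedDeriv n h) (𝓝[s] 0) (𝓝 (iteratedDeriv n h 0)) :=
    hcont.continuousWithinAt
  have t2 : Tendsto (iteratedDeriv n h) (𝓝[s] 0) (𝓝 0) := by
    refine Tendsto.congr' ?_ tendsto_const_nhds
    exact eventually_nhdsWithin_of_forall (fun x hx => (h1 x hx).symm)
  exact tendsto_nhds_unique t1 t2

/-- If two `C^∞` functions on `ℝ` satisfy `f = g` on the positive axis and `f = -g` on the
negative axis, then all derivatives of `f` and of `g` vanish at the origin (the origin is a
zero of infinite order). -/
theorem iteratedDeriv_eq_zero_of_sign_flip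
    (f g : ℝ → ℝ) (hf : ContDiff ℝ (⊤ : ℕ∞) f) (hg : ContDiff ℝ (⊤ : ℕ∞) g)
    (hpos : ∀ x : ℝ, 0 < x → f x = g x)
    (hneg : ∀ x : ℝ, x < 0 → f x = -g x) :
    ∀ n : ℕ, iteratedDeriv n f 0 = 0 ∧ iteratedDeriv n g 0 = 0 := by
  intro n
  have hsub : ∀ n, iteratedDeriv n (f - g) 0 = 0 :=
    vanish_of_eventually_zero (hf.sub hg) isOpen_Ioi
      (fun x hx => by simp [Pi.sub_apply, hpos x hx]) (by exact nhdsGT_neBot 0)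
  have hadd : ∀ n, iteratedDeriv n (f + g) 0 = 0 :=
    vanish_of_eventually_zero (hf.add hg) isOpen_Iio
      (fun x hx => by simp [Pi.add_apply, hneg x hx]) (by exact nhdsLT_neBot 0)
  have e2 : iteratedDeriv n f 0 + iteratedDeriv n g 0 = 0 := by
    have := hadd n
    rwa [iteratedDeriv_eq_iteratedFDeriv,
      iteratedFDeriv_add_apply (hf.of_le (by exact_mod_cast le_top)).contDiffAt (hg.of_le (by exact_mod_cast le_top)).contDiffAt,
      ContinuousMultilinearMap.add_apply, ← iteratedDeriv_eq_iteratedFDeriv,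
      ← iteratedDeriv_eq_iteratedFDeriv] at this
  have e1 : iteratedDeriv n f 0 - iteratedDeriv n g 0 = 0 := by
    have := hsub n
    rw [show f - g = f + -g from sub_eq_add_neg f g, iteratedDeriv_eq_iteratedFDeriv,
      iteratedFDeriv_add_apply (hf.of_le (by exact_mod_cast le_top)).contDiffAt (show ContDiff ℝ n (-g) from (hg.of_le (by exact_mod_cast le_top)).neg).contDiffAt,
      ContinuousMultilinearMap.add_apply, ← iteratedDeriv_eq_iteratedFDeriv,
      ← iteratedDeriv_eq_iteratedFDeriv, iteratedDeriv_neg] at this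
    linarith
  constructor <;> linarith
end

section
/- Let r₁, r₂ > 0 with r₁ ≠ r₂, and set L = | log(r₁/r₂) |. Then sup_{1 ≤ s ≤ 2} max( | log( (r₁/r₂)^{2s+1} ) |, | log( (r₁/r₂)^{2s−1} ) | ) = 5 L, and consequently, writing δ for this supremum, δ/(1+δ) = 1 / ( 1 + 1/(5 | log(r₁/r₂) |) ). Moreover this value is unchanged when r₁ and r₂ are interchanged. -/
lemma sup_aux_circ (x : ℝ) (hx : 0 < x) :
    sSup ((fun s : ℝ => max |Real.log (x ^ (2 * s + 1))|
        |Real.log (x ^ (2 * s - 1))|) '' Set.Icc 1 2) = 5 * |Real.log x| := by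
  apply IsGreatest.csSup_eq
  constructor
  · refine ⟨2, by norm_num, ?_⟩
    simp only [Real.log_rpow hx, abs_mul]
    norm_num
    nlinarith [abs_nonneg (Real.log x)]
  · rintro y ⟨s, hs, rfl⟩
    obtain ⟨hs1, hs2⟩ := hs
    simp only [Real.log_rpow hx, abs_mul]
    apply max_le
    · have : |2 * s + 1| ≤ 5 := by rw [abs_le]; constructor <;> linarith
      nlinarith [abs_nonneg (Real.log x)]
    · have : |2 * s - 1| ≤ 3 := by rw [abs_le]; constructor <;> linarith
      nlinarith [abs_nonneg (Real.log x)]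

/-- The spectral length of the rescaling map between circles of radii `r₁` and `r₂`:
the supremum over `s ∈ [1,2]` of
`max(|log((r₁/r₂)^(2s+1))|, |log((r₁/r₂)^(2s-1))|)` equals `5 |log(r₁/r₂)|`, hence
`δ/(1+δ) = 1/(1 + 1/(5 |log(r₁/r₂)|))`, a value symmetric in `r₁` and `r₂`. -/
theorem length_rescaling_circles (r₁ r₂ : ℝ) (h₁ : 0 < r₁) (h₂ : 0 < r₂) (hne : r₁ ≠ r₂) :
    sSup ((fun s : ℝ => max |Real.log ((r₁ / r₂) ^ (2 * s + 1))|
        |Real.log ((r₁ / r₂) ^ (2 * s - 1))|) '' Set.Icc 1 2)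
      = 5 * |Real.log (r₁ / r₂)| ∧
    (sSup ((fun s : ℝ => max |Real.log ((r₁ / r₂) ^ (2 * s + 1))|
        |Real.log ((r₁ / r₂) ^ (2 * s - 1))|) '' Set.Icc 1 2)) /
      (1 + sSup ((fun s : ℝ => max |Real.log ((r₁ / r₂) ^ (2 * s + 1))|
        |Real.log ((r₁ / r₂) ^ (2 * s - 1))|) '' Set.Icc 1 2))
      = 1 / (1 + 1 / (5 * |Real.log (r₁ / r₂)|)) ∧
    (sSup ((fun s : ℝ => max |Real.log ((r₁ / r₂) ^ (2 * s + 1))|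
        |Real.log ((r₁ / r₂) ^ (2 * s - 1))|) '' Set.Icc 1 2)) /
      (1 + sSup ((fun s : ℝ => max |Real.log ((r₁ / r₂) ^ (2 * s + 1))|
        |Real.log ((r₁ / r₂) ^ (2 * s - 1))|) '' Set.Icc 1 2))
      =
    (sSup ((fun s : ℝ => max |Real.log ((r₂ / r₁) ^ (2 * s + 1))|
        |Real.log ((r₂ / r₁) ^ (2 * s - 1))|) '' Set.Icc 1 2)) /
      (1 + sSup ((fun s : ℝ => max |Real.log ((r₂ / r₁) ^ (2 * s + 1))|
        |Real.log ((r₂ / r₁) ^ (2 * s - 1))|) '' Set.Icc 1 2)) := by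
  have hx : (0:ℝ) < r₁ / r₂ := div_pos h₁ h₂
  have hy : (0:ℝ) < r₂ / r₁ := div_pos h₂ h₁
  have hlog : Real.log (r₂ / r₁) = -Real.log (r₁ / r₂) := by
    rw [← Real.log_inv, inv_div]
  have habs : |Real.log (r₂ / r₁)| = |Real.log (r₁ / r₂)| := by
    rw [hlog, abs_neg]
  have hLpos : 0 < |Real.log (r₁ / r₂)| := by
    rw [abs_pos]
    intro h
    have := Real.log_eq_zero.mp h
    rcases this with h | h | h
    · exact hx.ne' h
    · exact hne (by field_simp at h; linarith)
    · linarith [hx]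
  have e1 := sup_aux_circ (r₁ / r₂) hx
  have e2 := sup_aux_circ (r₂ / r₁) hy
  refine ⟨e1, ?_, ?_⟩
  · rw [e1]
    have h5 : (0:ℝ) < 5 * |Real.log (r₁ / r₂)| := by linarith
    field_simp
    ring
  · rw [e1, e2, habs]
end
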